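/- Let α, β, ρ, x0, ū be positive real numbers satisfying (β − ρ·x0)·ū − α·x0 > 0, and let t_f > 0. Then there exists a unique t_sw ∈ (0, t_f) such that F(t_sw) = x0, i.e. such that x0 = exp((−α − ρ·ū)·(t_f − t_sw))·(x0·exp(−α·t_sw) − β·ū/(α + ρ·ū)) + β·ū/(α + ρ·ū). -/

import Mathlib

/-!
Writing `k = α + ρ ū` and `c = β ū / k` for the equilibrium under full input,
`F τ = c + e^{-k (t_f - τ)} (x0 e^{-α τ} - c)` has derivative
`e^{-k (t_f - τ)} ū (ρ x0 e^{-α τ} - β)`, which is negative for `τ > 0` since (A) forces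
`ρ x0 < β`. So `F` is strictly decreasing on `[0, t_f]`, from `F 0 > x0` (because (A) says
exactly `x0 < c`) down to `F t_f = x0 e^{-α t_f} < x0`, and the intermediate value theorem
gives exactly one crossing of the level `x0`.
-/

/-- `F τ` is the terminal value `x(t_f)` of the bilinear furnace model started at
`x(0) = x0`, with input `u ≡ 0` on `[0, τ)` and `u ≡ ū` on `[τ, t_f]`. -/
noncomputable def F (α β ρ x0 ubar tf τ : ℝ) : ℝ :=
  Real.exp ((-α - ρ * ubar) * (tf - τ)) *
      (x0 * Real.exp (-α * τ) - β * ubar / (α + ρ * ubar)) +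
    β * ubar / (α + ρ * ubar)

open Set

theorem StrictAntiOn.existsUnique_mem_Ioo_eq {α δ : Type*} [ConditionallyCompleteLinearOrder α]
    [DenselyOrdered α] [TopologicalSpace α] [OrderTopology α] [LinearOrder δ]
    [TopologicalSpace δ] [OrderClosedTopology δ] {a b : α} {f : α → δ} {y : δ} (hab : a ≤ b)
    (hf : ContinuousOn f (Icc a b)) (hanti : StrictAntiOn f (Icc a b))
    (hy : y ∈ Ioo (f b) (f a)) : ∃! x, x ∈ Ioo a b ∧ f x = y := by
  obtain ⟨x, hx, hfx⟩ := intermediate_value_Ioo' hab hf hy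
  refine ⟨x, ⟨hx, hfx⟩, fun x' ⟨hx', hfx'⟩ => ?_⟩
  exact hanti.injOn (Ioo_subset_Icc_self hx') (Ioo_subset_Icc_self hx) (hfx'.trans hfx.symm)

theorem continuous_F (α β ρ x0 ubar tf : ℝ) : Continuous (F α β ρ x0 ubar tf) := by
  unfold F
  fun_prop

section Furnace

variable {α β ρ x0 ubar : ℝ}

theorem hasDerivAt_F (tf τ : ℝ) (hk : α + ρ * ubar ≠ 0) :
    HasDerivAt (F α β ρ x0 ubar tf)
      (Real.exp ((-α - ρ * ubar) * (tf - τ)) * (ubar * (ρ * x0 * Real.exp (-α * τ) - β))) τ := by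
  have hexp : HasDerivAt (fun τ => Real.exp ((-α - ρ * ubar) * (tf - τ)))
      (Real.exp ((-α - ρ * ubar) * (tf - τ)) * (α + ρ * ubar)) τ :=
    (((hasDerivAt_id' τ).const_sub tf).const_mul (-α - ρ * ubar)).exp.congr_deriv (by ring)
  have hfree : HasDerivAt (fun τ => x0 * Real.exp (-α * τ) - β * ubar / (α + ρ * ubar))
      (x0 * (Real.exp (-α * τ) * -α)) τ :=
    ((((hasDerivAt_id' τ).const_mul (-α)).exp.congr_deriv (by simp)).const_mul x0).sub_const _
  refine ((hexp.mul hfree).add_const _).congr_deriv ?_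
  field_simp
  ring

theorem strictAntiOn_F (tf : ℝ) (hα : 0 ≤ α) (hρx0 : 0 ≤ ρ * x0) (hu : 0 < ubar)
    (hρβ : ρ * x0 < β) (hk : α + ρ * ubar ≠ 0) :
    StrictAntiOn (F α β ρ x0 ubar tf) (Ici 0) := by
  refine strictAntiOn_of_deriv_neg (convex_Ici 0) (continuous_F ..).continuousOn fun τ hτ => ?_
  rw [interior_Ici, mem_Ioi] at hτ
  rw [(hasDerivAt_F tf τ hk).deriv]
  have hdecay : Real.exp (-α * τ) ≤ 1 := Real.exp_le_one_iff.mpr (by nlinarith)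
  have hgap : ρ * x0 * Real.exp (-α * τ) - β < 0 := by nlinarith
  exact mul_neg_of_pos_of_neg (Real.exp_pos _) (mul_neg_of_pos_of_neg hu hgap)

theorem F_self (tf : ℝ) : F α β ρ x0 ubar tf tf = x0 * Real.exp (-α * tf) := by
  simp [F]

theorem lt_F_zero {tf : ℝ} (htf : 0 < tf) (hk : 0 < α + ρ * ubar)
    (hx0 : x0 < β * ubar / (α + ρ * ubar)) : x0 < F α β ρ x0 ubar tf 0 := by
  have hdecay : Real.exp ((-α - ρ * ubar) * tf) < 1 := Real.exp_lt_one_iff.mpr (by nlinarith)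
  simp only [F, sub_zero, mul_zero, Real.exp_zero, mul_one]
  nlinarith [Real.exp_pos ((-α - ρ * ubar) * tf)]

end Furnace

theorem stmt_10_general (α β ρ x0 ubar : ℝ)
    (hα : 0 < α) (hρ : 0 < ρ) (hx0 : 0 < x0) (hu : 0 < ubar)
    (hA : (β - ρ * x0) * ubar - α * x0 > 0) (tf : ℝ) (htf : 0 < tf) :
    ∃! tsw : ℝ, tsw ∈ Set.Ioo 0 tf ∧ F α β ρ x0 ubar tf tsw = x0 := by
  have hk : 0 < α + ρ * ubar := by positivity
  have hρβ : ρ * x0 < β := by nlinarith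
  have hc : x0 < β * ubar / (α + ρ * ubar) := by rw [lt_div_iff₀ hk]; nlinarith
  have hFtf : F α β ρ x0 ubar tf tf < x0 := by
    rw [F_self]
    exact mul_lt_of_lt_one_right hx0 (Real.exp_lt_one_iff.mpr (by nlinarith))
  exact StrictAntiOn.existsUnique_mem_Ioo_eq htf.le (continuous_F ..).continuousOn
    ((strictAntiOn_F tf hα.le (by positivity) hu hρβ hk.ne').mono Icc_subset_Ici_self)
    ⟨hFtf, lt_F_zero htf hk hc⟩

/-- Under assumption (A), for every terminal time `t_f > 0` there is a
unique switching time `t_sw ∈ (0, t_f)` with `F(t_sw) = x0`. -/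
theorem stmt_10 (α β ρ x0 ubar : ℝ)
    (hα : 0 < α) (hβ : 0 < β) (hρ : 0 < ρ) (hx0 : 0 < x0) (hu : 0 < ubar)
    (hA : (β - ρ * x0) * ubar - α * x0 > 0) (tf : ℝ) (htf : 0 < tf) :
    ∃! tsw : ℝ, tsw ∈ Set.Ioo 0 tf ∧ F α β ρ x0 ubar tf tsw = x0 :=
  stmt_10_general α β ρ x0 ubar hα hρ hx0 hu hA tf htf
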